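/- No bad gradients from the mesa construction: Let ℓ = 1/N for some positive integer N, let Γ ≥ 6/ℓ, let G = {0, ℓ, 2ℓ, …, 1−ℓ, 1}², and for every p ∈ G let A^p = (a_c^p, a_r^p, a_t^p, a_l^p, a_b^p) ∈ [0.4, 0.6]⁵ and g^p ∈ [−0.01, 0.01]². Assume that for all p, p' ∈ G with ‖p − p'‖_∞ ≤ ℓ: (1) ‖g^p − g^{p'}‖_∞ ≤ ℓ, and (2) for all i, j ∈ {c, r, t, l, b}, |a_i^{p'} − a_j^p − ⟨2g^p, p' − p⟩| ≤ ℓ². Define f : [0,1]² → ℝ by f(x) = max_{p ∈ G} M(x; p, A^p, g^p). Then for any p ∈ G and any x ∈ [0,1]² with ‖x − p‖_∞ ≤ ℓ/2 at which f is differentiable: if g₁^p ≥ 10ℓ then ∂f/∂x₁(x) ≥ g₁^p − ℓ; if g₁^p ≤ −10ℓ then ∂f/∂x₁(x) ≤ g₁^p + ℓ; if g₂^p ≥ 10ℓ then ∂f/∂x₂(x) ≥ g₂^p − ℓ; and if g₂^p ≤ −10ℓ then ∂f/∂x₂(x) ≤ g₂^p + ℓ. -/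

import Mathlib

/-!
Let `x` lie within `ℓ/2` of the grid point `p` and let `v ∈ {±e₁, ±e₂}` with `⟨g^p, v⟩ ≥ 10ℓ`.
A mesa is at least `0.39` within `ℓ/2` of its centre and far below that at distance `3ℓ/2`, so
`f x` is attained by the mesa of a grid neighbour `q` of `p`, and `⟨g^q, v⟩ ≥ ⟨g^p, v⟩ - ℓ`.
Along `v`, every affine piece of this mesa grows at rate at least `⟨g^q, v⟩`, except the wall with
outward normal `v`. That wall is not active at `x`: otherwise `x` lies beyond `q` in direction `v`,
so `q + ℓv` is a grid point, and the compatibility conditions make its mesa strictly larger than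
the mesa of `q` at `x`. Hence `f ≥ mesa_q` grows at rate `⟨g^p, v⟩ - ℓ` from `x` along `v`.
-/

noncomputable section

/-- The central affine piece of a mesa. -/
def Pc (p : ℝ × ℝ) (a : ℝ) (g : ℝ × ℝ) (x : ℝ × ℝ) : ℝ :=
  (x.1 - p.1) * g.1 + (x.2 - p.2) * g.2 + a

/-- The right affine piece of a mesa. -/
def Pr (ℓ Γ : ℝ) (p : ℝ × ℝ) (a : ℝ) (g : ℝ × ℝ) (x : ℝ × ℝ) : ℝ :=
  (x.1 - p.1) * (-Γ + g.1) + (x.2 - p.2) * g.2 + a + Γ * ℓ / 2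

/-- The top affine piece of a mesa. -/
def Pt (ℓ Γ : ℝ) (p : ℝ × ℝ) (a : ℝ) (g : ℝ × ℝ) (x : ℝ × ℝ) : ℝ :=
  (x.1 - p.1) * g.1 + (x.2 - p.2) * (-Γ + g.2) + a + Γ * ℓ / 2

/-- The left affine piece of a mesa. -/
def Pl (ℓ Γ : ℝ) (p : ℝ × ℝ) (a : ℝ) (g : ℝ × ℝ) (x : ℝ × ℝ) : ℝ :=
  (x.1 - p.1) * (Γ + g.1) + (x.2 - p.2) * g.2 + a + Γ * ℓ / 2

/-- The bottom affine piece of a mesa. -/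
def Pb (ℓ Γ : ℝ) (p : ℝ × ℝ) (a : ℝ) (g : ℝ × ℝ) (x : ℝ × ℝ) : ℝ :=
  (x.1 - p.1) * g.1 + (x.2 - p.2) * (Γ + g.2) + a + Γ * ℓ / 2

/-- The mesa function with center `p`, values `A` (indexed `0 = c, 1 = r, 2 = t, 3 = l, 4 = b`)
and gradient `g`: the minimum of the five affine pieces. -/
def mesa (ℓ Γ : ℝ) (p : ℝ × ℝ) (A : Fin 5 → ℝ) (g : ℝ × ℝ) (x : ℝ × ℝ) : ℝ :=
  min (Pc p (A 0) g x)
    (min (Pr ℓ Γ p (A 1) g x) (min (Pt ℓ Γ p (A 2) g x) (min (Pl ℓ Γ p (A 3) g x) (Pb ℓ Γ p (A 4) g x))))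

/-- The index set of the grid `{0, ℓ, 2ℓ, …, 1}²` where `ℓ = 1/N`. -/
def grid (N : ℕ) : Finset (ℕ × ℕ) := Finset.range (N + 1) ×ˢ Finset.range (N + 1)

/-- The grid point corresponding to an index pair. -/
def pt (ℓ : ℝ) (k : ℕ × ℕ) : ℝ × ℝ := ((k.1 : ℝ) * ℓ, (k.2 : ℝ) * ℓ)

theorem grid_nonempty (N : ℕ) : (grid N).Nonempty :=
  ⟨(0, 0), by simp [grid]⟩

open Filter Set Topology

theorem le_fderiv_apply_of_eventually_le {E : Type*} [NormedAddCommGroup E] [NormedSpace ℝ E]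
    {f : E → ℝ} {x e : E} {c : ℝ} (hf : DifferentiableAt ℝ f x)
    (h : ∀ᶠ t in 𝓝[>] (0 : ℝ), f x + c * t ≤ f (x + t • e)) : c ≤ fderiv ℝ f x e := by
  refine ge_of_tendsto (hf.hasFDerivAt.hasLineDerivAt e).tendsto_slope_zero_right ?_
  filter_upwards [h, self_mem_nhdsWithin] with t ht (htpos : 0 < t)
  rw [smul_eq_mul, le_inv_mul_iff₀ htpos]
  linarith

namespace Mesa

def dot (u v : ℝ × ℝ) : ℝ := u.1 * v.1 + u.2 * v.2

def dir : Fin 4 → ℝ × ℝ := ![(1, 0), (0, 1), (-1, 0), (0, -1)]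

-- `Pr`, `Pt`, `Pl`, `Pb` are the walls with outward normals `dir 0`, …, `dir 3` (`mesa_eq_min`).
def wall (ℓ Γ : ℝ) (p : ℝ × ℝ) (a : ℝ) (g v : ℝ × ℝ) (x : ℝ × ℝ) : ℝ :=
  dot (x - p) (g - Γ • v) + a + Γ * ℓ / 2

theorem dot_sub_left (u v w : ℝ × ℝ) : dot (u - v) w = dot u w - dot v w := by
  simp only [dot, Prod.fst_sub, Prod.snd_sub]
  ring

theorem dot_neg_right (u v : ℝ × ℝ) : dot u (-v) = -dot u v := by
  simp only [dot, Prod.fst_neg, Prod.snd_neg]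
  ring

theorem abs_dot_le (u v : ℝ × ℝ) : |dot u v| ≤ 2 * ‖u‖ * ‖v‖ := by
  have h1 : |u.1 * v.1| ≤ ‖u‖ * ‖v‖ := by
    rw [abs_mul]
    exact mul_le_mul (norm_fst_le u) (norm_fst_le v) (abs_nonneg _) (norm_nonneg _)
  have h2 : |u.2 * v.2| ≤ ‖u‖ * ‖v‖ := by
    rw [abs_mul]
    exact mul_le_mul (norm_snd_le u) (norm_snd_le v) (abs_nonneg _) (norm_nonneg _)
  unfold dot
  linarith [abs_add_le (u.1 * v.1) (u.2 * v.2)]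

theorem abs_dot_dir_le (u : ℝ × ℝ) (i : Fin 4) : |dot u (dir i)| ≤ ‖u‖ := by
  fin_cases i <;> simp only [dot, dir] <;> simp
  all_goals first | exact norm_fst_le u | exact norm_snd_le u

theorem exists_dot_dir_eq_norm (u : ℝ × ℝ) : ∃ i, dot u (dir i) = ‖u‖ := by
  rw [Prod.norm_def, Real.norm_eq_abs, Real.norm_eq_abs]
  rcases le_total |u.2| |u.1| with h | h
  · rw [max_eq_left h]
    rcases abs_choice u.1 with h1 | h1
    · exact ⟨0, by simp [dot, dir, h1]⟩
    · exact ⟨2, by simp [dot, dir, h1]⟩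
  · rw [max_eq_right h]
    rcases abs_choice u.2 with h2 | h2
    · exact ⟨1, by simp [dot, dir, h2]⟩
    · exact ⟨3, by simp [dot, dir, h2]⟩

theorem norm_dir (i : Fin 4) : ‖dir i‖ = 1 := by
  fin_cases i <;> simp [dir]

theorem dot_dir_self (i : Fin 4) : dot (dir i) (dir i) = 1 := by
  fin_cases i <;> simp [dot, dir]

theorem dot_dir_nonpos {i j : Fin 4} (h : i ≠ j) : dot (dir i) (dir j) ≤ 0 := by
  fin_cases i <;> fin_cases j <;> simp_all [dot, dir]

theorem dir_trichotomy (i j : Fin 4) :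
    j = i ∨ dir j = -dir i ∨ dot (dir i) (dir j) = 0 := by
  fin_cases i <;> fin_cases j <;> simp [dot, dir]

section Pieces

variable {ℓ Γ : ℝ} {p : ℝ × ℝ} {A : Fin 5 → ℝ} {a : ℝ} {g x : ℝ × ℝ}

theorem mesa_eq_min : mesa ℓ Γ p A g x = min (Pc p (A 0) g x)
    (min (wall ℓ Γ p (A 1) g (dir 0) x) (min (wall ℓ Γ p (A 2) g (dir 1) x)
      (min (wall ℓ Γ p (A 3) g (dir 2) x) (wall ℓ Γ p (A 4) g (dir 3) x)))) := by
  simp [mesa, Pr, Pt, Pl, Pb, wall, dot, dir]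
  ring_nf

theorem le_mesa_iff {c : ℝ} : c ≤ mesa ℓ Γ p A g x ↔
    c ≤ Pc p (A 0) g x ∧ ∀ i : Fin 4, c ≤ wall ℓ Γ p (A i.succ) g (dir i) x := by
  simp [mesa_eq_min, Fin.forall_fin_succ]

theorem lt_mesa_iff {c : ℝ} : c < mesa ℓ Γ p A g x ↔
    c < Pc p (A 0) g x ∧ ∀ i : Fin 4, c < wall ℓ Γ p (A i.succ) g (dir i) x := by
  simp [mesa_eq_min, Fin.forall_fin_succ]

theorem mesa_le_Pc (ℓ Γ : ℝ) (p : ℝ × ℝ) (A : Fin 5 → ℝ) (g x : ℝ × ℝ) :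
    mesa ℓ Γ p A g x ≤ Pc p (A 0) g x :=
  (le_mesa_iff.1 le_rfl).1

theorem mesa_le_wall (ℓ Γ : ℝ) (p : ℝ × ℝ) (A : Fin 5 → ℝ) (g x : ℝ × ℝ) (i : Fin 4) :
    mesa ℓ Γ p A g x ≤ wall ℓ Γ p (A i.succ) g (dir i) x :=
  (le_mesa_iff.1 le_rfl).2 i

theorem Pc_eq : Pc p a g x = dot (x - p) g + a := by
  simp [Pc, dot]

theorem wall_eq (v : ℝ × ℝ) :
    wall ℓ Γ p a g v x = dot (x - p) g - Γ * dot (x - p) v + a + Γ * ℓ / 2 := by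
  simp only [wall, dot, Prod.fst_sub, Prod.snd_sub, Prod.smul_fst, Prod.smul_snd, smul_eq_mul]
  ring

theorem Pc_add_smul (t : ℝ) (e : ℝ × ℝ) : Pc p a g (x + t • e) = Pc p a g x + t * dot g e := by
  simp only [Pc, dot, Prod.fst_add, Prod.snd_add, Prod.smul_fst, Prod.smul_snd, smul_eq_mul]
  ring

theorem wall_add_smul (v : ℝ × ℝ) (t : ℝ) (e : ℝ × ℝ) :
    wall ℓ Γ p a g v (x + t • e) = wall ℓ Γ p a g v x + t * (dot g e - Γ * dot v e) := by
  simp only [wall, dot, Prod.fst_add, Prod.snd_add, Prod.fst_sub, Prod.snd_sub, Prod.smul_fst,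
    Prod.smul_snd, smul_eq_mul]
  ring

theorem continuous_wall (v : ℝ × ℝ) : Continuous (wall ℓ Γ p a g v) := by
  unfold wall dot
  fun_prop

theorem eventually_mesa_add_smul_dir_ge {c : ℝ} (hΓ : 0 ≤ Γ) {i : Fin 4}
    (hc : c ≤ dot g (dir i)) (hlt : mesa ℓ Γ p A g x < wall ℓ Γ p (A i.succ) g (dir i) x) :
    ∀ᶠ t in 𝓝[>] (0 : ℝ), mesa ℓ Γ p A g x + c * t ≤ mesa ℓ Γ p A g (x + t • dir i) := by
  have hcont : Tendsto (fun t : ℝ => wall ℓ Γ p (A i.succ) g (dir i) (x + t • dir i) - c * t)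
      (𝓝 0) (𝓝 (wall ℓ Γ p (A i.succ) g (dir i) x)) :=
    (((continuous_wall _).comp (by fun_prop)).sub (by fun_prop)).tendsto' 0 _ (by simp)
  filter_upwards [self_mem_nhdsWithin, nhdsWithin_le_nhds (hcont.eventually_const_lt hlt)]
    with t (ht : 0 < t) hwall_i
  have hct : c * t ≤ dot g (dir i) * t := mul_le_mul_of_nonneg_right hc ht.le
  rw [le_mesa_iff, Pc_add_smul]
  refine ⟨by linarith [mesa_le_Pc ℓ Γ p A g x], fun j => ?_⟩
  by_cases hji : j = i
  · subst hji
    linarith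
  · have hslope : 0 ≤ t * (Γ * -dot (dir j) (dir i)) :=
      mul_nonneg ht.le (mul_nonneg hΓ (neg_nonneg.2 (dot_dir_nonpos hji)))
    rw [wall_add_smul]
    linarith [mesa_le_wall ℓ Γ p A g x j]

theorem sub_le_mesa {α : ℝ} (hΓ : 0 ≤ Γ) (hA : ∀ i, α ≤ A i) (hx : ‖x - p‖ ≤ ℓ / 2) :
    α - 2 * ‖x - p‖ * ‖g‖ ≤ mesa ℓ Γ p A g x := by
  have hxg := abs_dot_le (x - p) g
  rw [le_mesa_iff, Pc_eq]
  refine ⟨by linarith [neg_abs_le (dot (x - p) g), hA 0], fun i => ?_⟩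
  have hv : Γ * dot (x - p) (dir i) ≤ Γ * (ℓ / 2) :=
    mul_le_mul_of_nonneg_left ((le_abs_self _).trans ((abs_dot_dir_le _ i).trans hx)) hΓ
  rw [wall_eq]
  linarith [neg_abs_le (dot (x - p) g), hA i.succ]

theorem mesa_le_add {β : ℝ} (hA : ∀ i, A i ≤ β) :
    mesa ℓ Γ p A g x ≤ 2 * ‖x - p‖ * ‖g‖ + β - Γ * (‖x - p‖ - ℓ / 2) := by
  obtain ⟨i, hi⟩ := exists_dot_dir_eq_norm (x - p)
  have hwall := mesa_le_wall ℓ Γ p A g x i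
  rw [wall_eq, hi] at hwall
  linarith [le_abs_self (dot (x - p) g), abs_dot_le (x - p) g, hA i.succ]

theorem dot_sub_dir_pos_of_wall_le (hℓ : 0 < ℓ) (hΓ : 2 * ℓ < Γ) {i : Fin 4}
    (hA : |A 0 - A i.succ| ≤ ℓ ^ 2)
    (hfront : wall ℓ Γ p (A i.succ) g (dir i) x ≤ mesa ℓ Γ p A g x) :
    0 < dot (x - p) (dir i) := by
  have hc := hfront.trans (mesa_le_Pc ℓ Γ p A g x)
  rw [wall_eq, Pc_eq] at hc
  by_contra! hu
  nlinarith [le_abs_self (A 0 - A i.succ)]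

theorem wall_lt_mesa_add_dir_of_wall_le {p' : ℝ × ℝ} {A' : Fin 5 → ℝ} {g' : ℝ × ℝ} {i : Fin 4}
    (hℓ : 0 < ℓ) (hΓ : 0 ≤ Γ) (hp' : p' = p + ℓ • dir i) (hx : ‖x - p‖ ≤ 3 * ℓ / 2)
    (hg' : ‖g' - g‖ ≤ ℓ) (hAA' : ∀ j j', |A' j - A j' - 2 * dot g (p' - p)| ≤ ℓ ^ 2)
    (hAA : ∀ j j', |A j - A j'| ≤ ℓ ^ 2) (hgi : 7 * ℓ < dot g (dir i))
    (hfront : wall ℓ Γ p (A i.succ) g (dir i) x ≤ mesa ℓ Γ p A g x) :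
    wall ℓ Γ p (A i.succ) g (dir i) x < mesa ℓ Γ p' A' g' x := by
  subst hp'
  set e := dir i
  obtain ⟨hc, hwalls⟩ := le_mesa_iff.1 hfront
  rw [wall_eq, Pc_eq] at hc
  -- Against the active wall, every piece of the new mesa gains `ℓ ⟨g, e⟩ > 7ℓ²` and loses at
  -- most `7ℓ²`; the opposite wall's loss `Γ (ℓ - 2⟨x - p, e⟩) ≤ 2ℓ²` comes from `hc`.
  have hAi (j : Fin 5) : 2 * ℓ * dot g e - ℓ ^ 2 ≤ A' j - A i.succ := by
    have hdot : dot g (p + ℓ • e - p) = ℓ * dot g e := by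
      simp only [dot, add_sub_cancel_left, Prod.smul_fst, Prod.smul_snd, smul_eq_mul]
      ring
    linarith [neg_abs_le (A' j - A i.succ - 2 * dot g (p + ℓ • e - p)), hAA' j i.succ]
  have hwg : -(3 * ℓ ^ 2) ≤ dot (x - p) (g' - g) := by
    have : 2 * ‖x - p‖ * ‖g' - g‖ ≤ 2 * (3 * ℓ / 2) * ℓ := by gcongr
    linarith [neg_abs_le (dot (x - p) (g' - g)), abs_dot_le (x - p) (g' - g)]
  have hge : ℓ * dot (g' - g) e ≤ ℓ ^ 2 := by
    rw [sq]
    exact mul_le_mul_of_nonneg_left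
      ((le_abs_self _).trans ((abs_dot_dir_le _ i).trans hg')) hℓ.le
  have hgi' : 7 * ℓ ^ 2 < ℓ * dot g e := by nlinarith
  have hℓ2 : 0 < ℓ ^ 2 := by positivity
  have hexp (v : ℝ × ℝ) : dot (x - (p + ℓ • e)) v = dot (x - p) v - ℓ * dot e v := by
    simp only [dot, Prod.fst_sub, Prod.snd_sub, Prod.fst_add, Prod.snd_add, Prod.smul_fst,
      Prod.smul_snd, smul_eq_mul]
    ring
  have hsplit : dot (x - p) g' - ℓ * dot e g' =
      dot (x - p) g + dot (x - p) (g' - g) - ℓ * dot g e - ℓ * dot (g' - g) e := by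
    simp only [dot, Prod.fst_sub, Prod.snd_sub]
    ring
  rw [lt_mesa_iff, Pc_eq, hexp, hsplit, wall_eq]
  refine ⟨by linarith [hAi 0, hAA 0 i.succ, le_abs_self (A 0 - A i.succ)], fun j => ?_⟩
  have hAj := hAi j.succ
  rw [wall_eq, hexp, hexp, hsplit]
  rcases dir_trichotomy i j with rfl | hj | hj
  · rw [dot_dir_self]
    linarith [mul_nonneg hΓ hℓ.le]
  · rw [hj, dot_neg_right, dot_neg_right, dot_dir_self]
    linarith [hAA 0 i.succ, le_abs_self (A 0 - A i.succ)]
  · have hw := hwalls j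
    rw [wall_eq, wall_eq] at hw
    rw [hj]
    linarith [hAA j.succ i.succ, le_abs_self (A j.succ - A i.succ)]

end Pieces

section Grid

variable {N : ℕ} {ℓ : ℝ}

theorem pt_mem_Icc (hℓ : 0 ≤ ℓ) (hNℓ : (N : ℝ) * ℓ = 1) {m : ℕ × ℕ} (hm : m ∈ grid N) :
    (pt ℓ m).1 ∈ Icc (0 : ℝ) 1 ∧ (pt ℓ m).2 ∈ Icc (0 : ℝ) 1 := by
  simp only [grid, Finset.mem_product, Finset.mem_range, Nat.lt_succ_iff] at hm
  have h (n : ℕ) (hn : n ≤ N) : (n : ℝ) * ℓ ∈ Icc (0 : ℝ) 1 :=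
    ⟨by positivity, hNℓ ▸ mul_le_mul_of_nonneg_right (by exact_mod_cast hn) hℓ⟩
  exact ⟨h _ hm.1, h _ hm.2⟩

theorem norm_sub_le_one_of_mem_Icc {x y : ℝ × ℝ} (hx : x.1 ∈ Icc (0 : ℝ) 1 ∧ x.2 ∈ Icc (0 : ℝ) 1)
    (hy : y.1 ∈ Icc (0 : ℝ) 1 ∧ y.2 ∈ Icc (0 : ℝ) 1) : ‖x - y‖ ≤ 1 := by
  obtain ⟨⟨hx1, hx1'⟩, hx2, hx2'⟩ := hx
  obtain ⟨⟨hy1, hy1'⟩, hy2, hy2'⟩ := hy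
  rw [Prod.norm_def, max_le_iff, Prod.fst_sub, Prod.snd_sub, Real.norm_eq_abs, Real.norm_eq_abs,
    abs_le, abs_le]
  constructor <;> constructor <;> linarith

theorem norm_pt_sub_pt_le_or (hℓ : 0 ≤ ℓ) (m k : ℕ × ℕ) :
    ‖pt ℓ m - pt ℓ k‖ ≤ ℓ ∨ 2 * ℓ ≤ ‖pt ℓ m - pt ℓ k‖ := by
  have hcoord (a b : ℕ) : ‖(a : ℝ) * ℓ - b * ℓ‖ = ((|(a : ℤ) - b| : ℤ) : ℝ) * ℓ := by
    rw [← sub_mul, norm_mul, Real.norm_eq_abs, Real.norm_eq_abs, abs_of_nonneg hℓ]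
    push_cast
    rfl
  have near {d : ℤ} (h : |d| ≤ 1) : ((|d| : ℤ) : ℝ) * ℓ ≤ ℓ :=
    mul_le_of_le_one_left hℓ (by exact_mod_cast h)
  have far {d : ℤ} (h : 1 < |d|) : 2 * ℓ ≤ ((|d| : ℤ) : ℝ) * ℓ :=
    mul_le_mul_of_nonneg_right (by exact_mod_cast Int.lt_iff_add_one_le.1 h) hℓ
  rw [Prod.norm_def]
  simp only [pt, Prod.fst_sub, Prod.snd_sub, hcoord]
  rcases le_or_gt |(m.1 : ℤ) - k.1| 1 with h1 | h1
  · rcases le_or_gt |(m.2 : ℤ) - k.2| 1 with h2 | h2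
    · exact Or.inl (max_le (near h1) (near h2))
    · exact Or.inr (le_max_of_le_right (far h2))
  · exact Or.inr (le_max_of_le_left (far h1))

theorem exists_mem_grid_pt_eq_add_dir (hℓ : 0 < ℓ) (hNℓ : (N : ℝ) * ℓ = 1)
    {m : ℕ × ℕ} (hm : m ∈ grid N) {x : ℝ × ℝ} (hx : x.1 ∈ Icc (0 : ℝ) 1 ∧ x.2 ∈ Icc (0 : ℝ) 1)
    {i : Fin 4} (hi : 0 < dot (x - pt ℓ m) (dir i)) :
    ∃ m' ∈ grid N, pt ℓ m' = pt ℓ m + ℓ • dir i := by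
  simp only [grid, Finset.mem_product, Finset.mem_range] at hm
  have lt_N (n : ℕ) (h : (n : ℝ) * ℓ < 1) : n < N := by
    rw [← hNℓ] at h
    exact_mod_cast lt_of_mul_lt_mul_right h hℓ.le
  have pos (n : ℕ) (h : 0 < (n : ℝ) * ℓ) : 0 < n := by
    exact_mod_cast pos_of_mul_pos_left h hℓ.le
  fin_cases i <;> simp [dot, dir, pt] at hi
  · have := lt_N m.1 (by linarith [hx.1.2])
    exact ⟨(m.1 + 1, m.2), by simp [grid]; omega, by simp [pt, dir]; ring⟩
  · have := lt_N m.2 (by linarith [hx.2.2])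
    exact ⟨(m.1, m.2 + 1), by simp [grid]; omega, by simp [pt, dir]; ring⟩
  · have := pos m.1 (by linarith [hx.1.1])
    exact ⟨(m.1 - 1, m.2), by simp [grid]; omega, by simp [pt, dir, Nat.cast_sub this]; ring⟩
  · have := pos m.2 (by linarith [hx.2.1])
    exact ⟨(m.1, m.2 - 1), by simp [grid]; omega, by simp [pt, dir, Nat.cast_sub this]; ring⟩

end Grid

section MaxOfMesas

variable {N : ℕ} {ℓ Γ : ℝ} {A : ℕ × ℕ → Fin 5 → ℝ} {g : ℕ × ℕ → ℝ × ℝ} {x : ℝ × ℝ}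

theorem norm_pt_sub_pt_le_of_mesa_le (hℓ : 0 < ℓ) (hNℓ : (N : ℝ) * ℓ = 1)
    (hΓ : 6 ≤ Γ * ℓ) (hA : ∀ k ∈ grid N, ∀ i, A k i ∈ Icc (0.4 : ℝ) 0.6)
    (hg : ∀ k ∈ grid N, ‖g k‖ ≤ 0.01) {k m : ℕ × ℕ} (hk : k ∈ grid N) (hm : m ∈ grid N)
    (hx : x.1 ∈ Icc (0 : ℝ) 1 ∧ x.2 ∈ Icc (0 : ℝ) 1) (hxk : ‖x - pt ℓ k‖ ≤ ℓ / 2)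
    (hle : mesa ℓ Γ (pt ℓ k) (A k) (g k) x ≤ mesa ℓ Γ (pt ℓ m) (A m) (g m) x) :
    ‖pt ℓ m - pt ℓ k‖ ≤ ℓ := by
  refine (norm_pt_sub_pt_le_or hℓ.le m k).resolve_right fun hfar => ?_
  have hΓ0 : 0 ≤ Γ := by nlinarith
  have hxm : 3 * ℓ / 2 ≤ ‖x - pt ℓ m‖ := by
    have := norm_sub_le_norm_sub_add_norm_sub (pt ℓ m) x (pt ℓ k)
    linarith [norm_sub_rev (pt ℓ m) x, norm_sub_rev (pt ℓ k) x]
  have hxm1 : ‖x - pt ℓ m‖ ≤ 1 := norm_sub_le_one_of_mem_Icc hx (pt_mem_Icc hℓ.le hNℓ hm)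
  have hlow : 0.4 - 2 * ‖x - pt ℓ k‖ * ‖g k‖ ≤ mesa ℓ Γ (pt ℓ k) (A k) (g k) x :=
    sub_le_mesa hΓ0 (fun i => (hA k hk i).1) hxk
  have hhigh : mesa ℓ Γ (pt ℓ m) (A m) (g m) x ≤
      2 * ‖x - pt ℓ m‖ * ‖g m‖ + 0.6 - Γ * (‖x - pt ℓ m‖ - ℓ / 2) :=
    mesa_le_add fun i => (hA m hm i).2
  have h1 : 2 * ‖x - pt ℓ k‖ * ‖g k‖ ≤ 2 * (ℓ / 2) * 0.01 := by gcongr; exact hg k hk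
  have h2 : 2 * ‖x - pt ℓ m‖ * ‖g m‖ ≤ 2 * 1 * 0.01 := by gcongr; exact hg m hm
  have h3 : Γ * ℓ ≤ Γ * (‖x - pt ℓ m‖ - ℓ / 2) := by gcongr; linarith
  norm_num at h1 h2 hlow hhigh
  linarith

theorem mesa_lt_wall_of_forall_mesa_le (hℓ : 0 < ℓ) (hℓ1 : ℓ ≤ 1) (hNℓ : (N : ℝ) * ℓ = 1)
    (hΓ : 6 ≤ Γ * ℓ)
    (hadj1 : ∀ k ∈ grid N, ∀ k' ∈ grid N, ‖pt ℓ k - pt ℓ k'‖ ≤ ℓ → ‖g k - g k'‖ ≤ ℓ)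
    (hadj2 : ∀ k ∈ grid N, ∀ k' ∈ grid N, ‖pt ℓ k - pt ℓ k'‖ ≤ ℓ → ∀ i j : Fin 5,
      |A k' i - A k j - 2 * dot (g k) (pt ℓ k' - pt ℓ k)| ≤ ℓ ^ 2)
    {m : ℕ × ℕ} (hm : m ∈ grid N)
    (hmax : ∀ j ∈ grid N, mesa ℓ Γ (pt ℓ j) (A j) (g j) x ≤ mesa ℓ Γ (pt ℓ m) (A m) (g m) x)
    (hx : x.1 ∈ Icc (0 : ℝ) 1 ∧ x.2 ∈ Icc (0 : ℝ) 1) (hxm : ‖x - pt ℓ m‖ ≤ 3 * ℓ / 2)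
    {i : Fin 4} (hgi : 7 * ℓ < dot (g m) (dir i)) :
    mesa ℓ Γ (pt ℓ m) (A m) (g m) x < wall ℓ Γ (pt ℓ m) (A m i.succ) (g m) (dir i) x := by
  by_contra! hfront
  have hΓ0 : 0 ≤ Γ := by nlinarith
  have hAm (j j' : Fin 5) : |A m j - A m j'| ≤ ℓ ^ 2 := by
    simpa [dot] using hadj2 m hm m hm (by simpa using hℓ.le) j j'
  have hu := dot_sub_dir_pos_of_wall_le hℓ (by nlinarith) (hAm 0 i.succ) hfront
  obtain ⟨m', hm', hpt⟩ := exists_mem_grid_pt_eq_add_dir hℓ hNℓ hm hx hu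
  have hclose : ‖pt ℓ m' - pt ℓ m‖ ≤ ℓ := by
    rw [hpt, add_sub_cancel_left, norm_smul, norm_dir, Real.norm_eq_abs, abs_of_pos hℓ, mul_one]
  have := wall_lt_mesa_add_dir_of_wall_le hℓ hΓ0 hpt hxm (hadj1 m' hm' m hm hclose)
    (hadj2 m hm m' hm' (by rwa [norm_sub_rev])) hAm hgi hfront
  linarith [hmax m' hm', mesa_le_wall ℓ Γ (pt ℓ m) (A m) (g m) x i]

theorem dot_dir_sub_le_fderiv (hℓ : 0 < ℓ) (hNℓ : (N : ℝ) * ℓ = 1) (hΓ : 6 ≤ Γ * ℓ)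
    (hA : ∀ k ∈ grid N, ∀ i, A k i ∈ Icc (0.4 : ℝ) 0.6) (hg : ∀ k ∈ grid N, ‖g k‖ ≤ 0.01)
    (hadj1 : ∀ k ∈ grid N, ∀ k' ∈ grid N, ‖pt ℓ k - pt ℓ k'‖ ≤ ℓ → ‖g k - g k'‖ ≤ ℓ)
    (hadj2 : ∀ k ∈ grid N, ∀ k' ∈ grid N, ‖pt ℓ k - pt ℓ k'‖ ≤ ℓ → ∀ i j : Fin 5,
      |A k' i - A k j - 2 * dot (g k) (pt ℓ k' - pt ℓ k)| ≤ ℓ ^ 2)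
    {f : ℝ × ℝ → ℝ}
    (hf : ∀ y, f y = (grid N).sup' (grid_nonempty N) fun k => mesa ℓ Γ (pt ℓ k) (A k) (g k) y)
    {k : ℕ × ℕ} (hk : k ∈ grid N) (hx : x.1 ∈ Icc (0 : ℝ) 1 ∧ x.2 ∈ Icc (0 : ℝ) 1)
    (hxk : ‖x - pt ℓ k‖ ≤ ℓ / 2) (hdiff : DifferentiableAt ℝ f x) {i : Fin 4}
    (hgk : 10 * ℓ ≤ dot (g k) (dir i)) :
    dot (g k) (dir i) - ℓ ≤ fderiv ℝ f x (dir i) := by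
  have hℓ1 : ℓ ≤ 1 := by
    linarith [(le_abs_self _).trans ((abs_dot_dir_le (g k) i).trans (hg k hk))]
  obtain ⟨m, hm, hfm⟩ := (grid N).exists_mem_eq_sup' (grid_nonempty N)
    fun j => mesa ℓ Γ (pt ℓ j) (A j) (g j) x
  have hmax (j : ℕ × ℕ) (hj : j ∈ grid N) :
      mesa ℓ Γ (pt ℓ j) (A j) (g j) x ≤ mesa ℓ Γ (pt ℓ m) (A m) (g m) x :=
    hfm ▸ (grid N).le_sup' (fun j => mesa ℓ Γ (pt ℓ j) (A j) (g j) x) hj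
  have hmk := norm_pt_sub_pt_le_of_mesa_le hℓ hNℓ hΓ hA hg hk hm hx hxk (hmax k hk)
  have hxm : ‖x - pt ℓ m‖ ≤ 3 * ℓ / 2 := by
    linarith [norm_sub_le_norm_sub_add_norm_sub x (pt ℓ k) (pt ℓ m), norm_sub_rev (pt ℓ k) (pt ℓ m)]
  have hgm : dot (g k) (dir i) - ℓ ≤ dot (g m) (dir i) := by
    have := (le_abs_self _).trans ((abs_dot_dir_le (g k - g m) i).trans
      (hadj1 k hk m hm (by rwa [norm_sub_rev])))
    rw [dot_sub_left] at this
    linarith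
  have hinact := mesa_lt_wall_of_forall_mesa_le hℓ hℓ1 hNℓ hΓ hadj1 hadj2 hm hmax hx hxm
    (i := i) (by linarith)
  refine le_fderiv_apply_of_eventually_le hdiff ?_
  filter_upwards [eventually_mesa_add_smul_dir_ge (by nlinarith) hgm hinact] with t ht
  rw [hf, hf, hfm]
  exact ht.trans ((grid N).le_sup' (fun j => mesa ℓ Γ (pt ℓ j) (A j) (g j) (x + t • dir i)) hm)

end MaxOfMesas

end Mesa

/-- No bad gradients from the mesa construction.  The norm on `ℝ × ℝ` is the sup-norm, and
`fderiv ℝ f x (1,0)`, `fderiv ℝ f x (0,1)` are the two partial derivatives of `f` at `x`. -/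
theorem mesa_no_bad_gradients (N : ℕ) (hN : 0 < N) (ℓ : ℝ) (hℓ : ℓ = 1 / N)
    (Γ : ℝ) (hΓ : 6 / ℓ ≤ Γ)
    (A : ℕ × ℕ → Fin 5 → ℝ) (hA : ∀ k ∈ grid N, ∀ i, A k i ∈ Set.Icc (0.4 : ℝ) 0.6)
    (g : ℕ × ℕ → ℝ × ℝ)
    (hg : ∀ k ∈ grid N, (g k).1 ∈ Set.Icc (-0.01 : ℝ) 0.01 ∧ (g k).2 ∈ Set.Icc (-0.01 : ℝ) 0.01)
    (hadj1 : ∀ k ∈ grid N, ∀ k' ∈ grid N, ‖pt ℓ k - pt ℓ k'‖ ≤ ℓ → ‖g k - g k'‖ ≤ ℓ)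
    (hadj2 : ∀ k ∈ grid N, ∀ k' ∈ grid N, ‖pt ℓ k - pt ℓ k'‖ ≤ ℓ → ∀ i j : Fin 5,
      |A k' i - A k j
        - (2 * (g k).1 * ((pt ℓ k').1 - (pt ℓ k).1) + 2 * (g k).2 * ((pt ℓ k').2 - (pt ℓ k).2))|
        ≤ ℓ ^ 2)
    (f : ℝ × ℝ → ℝ)
    (hf : ∀ x, f x = (grid N).sup' (grid_nonempty N) fun k => mesa ℓ Γ (pt ℓ k) (A k) (g k) x)
    (k : ℕ × ℕ) (hk : k ∈ grid N)
    (x : ℝ × ℝ) (hx : x.1 ∈ Set.Icc (0 : ℝ) 1 ∧ x.2 ∈ Set.Icc (0 : ℝ) 1)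
    (hxp : ‖x - pt ℓ k‖ ≤ ℓ / 2)
    (hdiff : DifferentiableAt ℝ f x) :
    (10 * ℓ ≤ (g k).1 → (g k).1 - ℓ ≤ fderiv ℝ f x (1, 0)) ∧
    ((g k).1 ≤ -(10 * ℓ) → fderiv ℝ f x (1, 0) ≤ (g k).1 + ℓ) ∧
    (10 * ℓ ≤ (g k).2 → (g k).2 - ℓ ≤ fderiv ℝ f x (0, 1)) ∧
    ((g k).2 ≤ -(10 * ℓ) → fderiv ℝ f x (0, 1) ≤ (g k).2 + ℓ) := by
  have hℓ0 : 0 < ℓ := by rw [hℓ]; positivity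
  have hNℓ : (N : ℝ) * ℓ = 1 := by rw [hℓ]; field_simp
  have hΓℓ : 6 ≤ Γ * ℓ := (div_le_iff₀ hℓ0).1 hΓ
  have hg' (k : ℕ × ℕ) (hk : k ∈ grid N) : ‖g k‖ ≤ 0.01 :=
    norm_prod_le_iff.2 ⟨abs_le.2 (hg k hk).1, abs_le.2 (hg k hk).2⟩
  have hadj2' : ∀ k ∈ grid N, ∀ k' ∈ grid N, ‖pt ℓ k - pt ℓ k'‖ ≤ ℓ → ∀ i j : Fin 5,
      |A k' i - A k j - 2 * Mesa.dot (g k) (pt ℓ k' - pt ℓ k)| ≤ ℓ ^ 2 := by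
    intro k hk k' hk' h i j
    convert hadj2 k hk k' hk' h i j using 4
    simp only [Mesa.dot, Prod.fst_sub, Prod.snd_sub]
    ring
  have key (i : Fin 4) := Mesa.dot_dir_sub_le_fderiv hℓ0 hNℓ hΓℓ hA hg' hadj1 hadj2' hf hk hx hxp
    hdiff (i := i)
  have key₀ := key 0
  have key₁ := key 1
  have key₂ := key 2
  have key₃ := key 3
  rw [show Mesa.dir 2 = -(1, 0) by simp [Mesa.dir], map_neg, Mesa.dot_neg_right] at key₂
  rw [show Mesa.dir 3 = -(0, 1) by simp [Mesa.dir], map_neg, Mesa.dot_neg_right] at key₃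
  simp only [Mesa.dot, Mesa.dir] at key₀ key₁ key₂ key₃
  norm_num at key₀ key₁ key₂ key₃
  exact ⟨fun h => by linarith [key₀ h], fun h => by linarith [key₂ (by linarith)],
    fun h => by linarith [key₁ h], fun h => by linarith [key₃ (by linarith)]⟩
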